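/- arXiv:2407.08900 — 9 statements merged into one kernel-verified Lean document; each statement's English description precedes it below -/
import Mathlib

section
/- Let H be the n-dimensional real Hilbert space ℓ₂ⁿ and T a linear operator on H. Then T preserves Birkhoff-James orthogonality at a nonzero x ∈ H if and only if x is an eigenvector of T*T. -/
open scoped RealInnerProductSpace

/-- Birkhoff-James orthogonality. -/
def BirkhoffOrth {E : Type*} [NormedAddCommGroup E] [NormedSpace ℝ E] (u v : E) : Prop :=
  ∀ t : ℝ, ‖u‖ ≤ ‖u + t • v‖

lemma birkhoff_iff_inner {E : Type*} [NormedAddCommGroup E] [InnerProductSpace ℝ E]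
    (u v : E) : BirkhoffOrth u v ↔ ⟪u, v⟫ = 0 := by
  constructor
  · intro h
    by_cases hv : v = 0
    · simp [hv]
    have hv2 : (0:ℝ) < ‖v‖ ^ 2 := pow_pos (norm_pos_iff.mpr hv) 2
    set t : ℝ := -⟪u, v⟫ / ‖v‖ ^ 2 with ht
    have h1 := h t
    have hsq : ‖u‖ ^ 2 ≤ ‖u + t • v‖ ^ 2 := by
      have := norm_nonneg u
      nlinarith [norm_nonneg (u + t • v)]
    have hexp : ‖u + t • v‖ ^ 2 = ‖u‖ ^ 2 + 2 * (t * ⟪u, v⟫) + t ^ 2 * ‖v‖ ^ 2 := by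
      rw [← real_inner_self_eq_norm_sq, ← real_inner_self_eq_norm_sq,
        ← real_inner_self_eq_norm_sq]
      simp only [inner_add_add_self, real_inner_smul_left, real_inner_smul_right,
        real_inner_comm u v]
      ring
    rw [hexp, ht] at hsq
    have : ⟪u, v⟫ ^ 2 ≤ 0 := by
      have h2 : 2 * (-⟪u, v⟫ / ‖v‖ ^ 2 * ⟪u, v⟫) + (-⟪u, v⟫ / ‖v‖ ^ 2) ^ 2 * ‖v‖ ^ 2
          = -(⟪u, v⟫ ^ 2) / ‖v‖ ^ 2 := by field_simp; ring
      have h3 : (0:ℝ) ≤ -(⟪u, v⟫ ^ 2) / ‖v‖ ^ 2 := by linarith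
      have h4 := (le_div_iff₀ hv2).mp h3
      nlinarith [h4]
    nlinarith [sq_nonneg ⟪u, v⟫]
  · intro h t
    have hexp : ‖u + t • v‖ ^ 2 = ‖u‖ ^ 2 + t ^ 2 * ‖v‖ ^ 2 := by
      rw [← real_inner_self_eq_norm_sq, ← real_inner_self_eq_norm_sq,
        ← real_inner_self_eq_norm_sq]
      simp only [inner_add_add_self, real_inner_smul_left, real_inner_smul_right,
        real_inner_comm u v, h]
      ring
    nlinarith [norm_nonneg u, norm_nonneg (u + t • v), sq_nonneg (t * ‖v‖)]

theorem stmt1 {n : ℕ} (T : EuclideanSpace ℝ (Fin n) →L[ℝ] EuclideanSpace ℝ (Fin n))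
    (x : EuclideanSpace ℝ (Fin n)) (hx : x ≠ 0) :
    (∀ y, BirkhoffOrth x y → BirkhoffOrth (T x) (T y)) ↔
      ∃ μ : ℝ, (ContinuousLinearMap.adjoint T) (T x) = μ • x := by
  have hxn : (0:ℝ) < ‖x‖ ^ 2 := pow_pos (norm_pos_iff.mpr hx) 2
  have hadj : ∀ z : EuclideanSpace ℝ (Fin n),
      ⟪(ContinuousLinearMap.adjoint T) (T x), z⟫ = ⟪T x, T z⟫ := fun z => by
    rw [ContinuousLinearMap.adjoint_inner_left]
  constructor
  · intro h
    set μ : ℝ := ⟪x, (ContinuousLinearMap.adjoint T) (T x)⟫ / ‖x‖ ^ 2 with hμ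
    refine ⟨μ, ?_⟩
    set w : EuclideanSpace ℝ (Fin n) := (ContinuousLinearMap.adjoint T) (T x) - μ • x with hw
    have hwx : ⟪w, x⟫ = 0 := by
      rw [hw, inner_sub_left, real_inner_smul_left, hμ,
        real_inner_self_eq_norm_sq, real_inner_comm]
      field_simp
      ring
    have key : ∀ z : EuclideanSpace ℝ (Fin n), ⟪w, z⟫ = 0 := by
      intro z
      set c : ℝ := ⟪x, z⟫ / ‖x‖ ^ 2 with hc
      set y : EuclideanSpace ℝ (Fin n) := z - c • x with hy
      have hxy : ⟪x, y⟫ = 0 := by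
        rw [hy, inner_sub_right, real_inner_smul_right, hc,
          real_inner_self_eq_norm_sq]
        field_simp
        ring
      have hTy : ⟪T x, T y⟫ = 0 := by
        have := h y ((birkhoff_iff_inner x y).mpr hxy)
        exact (birkhoff_iff_inner (T x) (T y)).mp this
      have hwy : ⟪w, y⟫ = 0 := by
        rw [hw, inner_sub_left, real_inner_smul_left, hxy, hadj, hTy]
        ring
      have hz : z = y + c • x := by rw [hy]; abel
      rw [hz, inner_add_right, real_inner_smul_right, hwy, hwx]
      ring
    have hw0 : w = 0 := inner_self_eq_zero.mp (key w)
    rw [hw] at hw0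
    exact sub_eq_zero.mp hw0
  · rintro ⟨μ, hμ⟩ y hy
    rw [birkhoff_iff_inner] at hy ⊢
    have : ⟪T x, T y⟫ = ⟪(ContinuousLinearMap.adjoint T) (T x), y⟫ := (hadj y).symm
    rw [this, hμ, real_inner_smul_left, hy]
    ring
end

section
/- Let H = ℓ₂ⁿ (real n-dimensional Hilbert space) and let A = {x₁,...,xₙ} ⊂ S_H be a set of n linearly independent unit vectors such that for every partition A = A₁ ∪ A₂ into nonempty sets, there exist u ∈ A₁ and v ∈ A₂ with ⟨u,v⟩ ≠ 0. Then any linear operator T on H preserving orthogonality at each point of A (i.e., for each xᵢ and all y, ⟨xᵢ,y⟩ = 0 implies ⟨Txᵢ,Ty⟩ = 0) is a scalar multiple of an isometry. -/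
theorem stmt4 {n : ℕ} (x : Fin n → EuclideanSpace ℝ (Fin n))
    (hx : ∀ i, ‖x i‖ = 1) (hli : LinearIndependent ℝ x)
    (hpart : ∀ A₁ A₂ : Set (EuclideanSpace ℝ (Fin n)), A₁.Nonempty → A₂.Nonempty →
      A₁ ∪ A₂ = Set.range x → ∃ u ∈ A₁, ∃ v ∈ A₂, inner ℝ u v ≠ (0 : ℝ))
    (T : EuclideanSpace ℝ (Fin n) →L[ℝ] EuclideanSpace ℝ (Fin n))
    (hT : ∀ i, ∀ y, inner ℝ (x i) y = (0 : ℝ) → inner ℝ (T (x i)) (T y) = (0 : ℝ)) :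
    ∃ c : ℝ, 0 ≤ c ∧ ∀ y, ‖T y‖ = c * ‖y‖ := by
  classical
  rcases Nat.eq_zero_or_pos n with hn | hn
  · subst hn
    refine ⟨0, le_refl _, fun y => ?_⟩
    have : y = 0 := Subsingleton.elim _ _
    simp [this]
  set S := (ContinuousLinearMap.adjoint T).comp T with hS
  have hSinner : ∀ z y : EuclideanSpace ℝ (Fin n),
      (inner ℝ (S z) y : ℝ) = inner ℝ (T z) (T y) := by
    intro z y
    simp [hS, ContinuousLinearMap.adjoint_inner_left]
  have hlam : ∀ i, ∃ c : ℝ, S (x i) = c • x i := by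
    intro i
    have hmem : S (x i) ∈ (ℝ ∙ x i) := by
      rw [← Submodule.orthogonal_orthogonal (ℝ ∙ x i)]
      rw [Submodule.mem_orthogonal]
      intro y hy
      have hxy : (inner ℝ (x i) y : ℝ) = 0 :=
        (Submodule.mem_orthogonal_singleton_iff_inner_right).mp hy
      have := hT i y hxy
      rw [real_inner_comm, hSinner, this]
    obtain ⟨c, hc⟩ := Submodule.mem_span_singleton.mp hmem
    exact ⟨c, hc.symm⟩
  choose lam hlam using hlam
  -- all eigenvalues equal
  set i₀ : Fin n := ⟨0, hn⟩ with hi₀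
  haveI : Nonempty (Fin n) := ⟨i₀⟩
  have key : ∀ i k : Fin n, (inner ℝ (x i) (x k) : ℝ) ≠ 0 → lam i = lam k := by
    intro i k hik
    have h1 : (inner ℝ (S (x i)) (x k) : ℝ) = lam i * inner ℝ (x i) (x k) := by
      rw [hlam i, real_inner_smul_left]
    have h2 : (inner ℝ (S (x i)) (x k) : ℝ) = lam k * inner ℝ (x i) (x k) := by
      rw [hSinner, real_inner_comm, ← hSinner, hlam k, real_inner_smul_left,
        real_inner_comm]
    have := h1.symm.trans h2
    exact mul_right_cancel₀ hik this
  have hall : ∀ i, lam i = lam i₀ := by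
    by_contra h
    push_neg at h
    obtain ⟨j, hj⟩ := h
    have := hpart (x '' {i | lam i = lam i₀}) (x '' {i | lam i ≠ lam i₀})
      ⟨x i₀, ⟨i₀, rfl, rfl⟩⟩ ⟨x j, ⟨j, hj, rfl⟩⟩ ?_
    · obtain ⟨u, ⟨i, hi, rfl⟩, v, ⟨k, hk, rfl⟩, huv⟩ := this
      exact hk ((key k i fun h0 => huv (by rwa [real_inner_comm])).trans hi)
    · rw [← Set.image_union]
      have : {i | lam i = lam i₀} ∪ {i | lam i ≠ lam i₀} = Set.univ := by
        ext i; by_cases hi : lam i = lam i₀ <;> simp [hi]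
      rw [this, Set.image_univ]
  -- S = lam i₀ • id
  have hcard : Fintype.card (Fin n) = Module.finrank ℝ (EuclideanSpace ℝ (Fin n)) := by
    simp [finrank_euclideanSpace_fin]
  let b := basisOfLinearIndependentOfCardEqFinrank hli hcard
  have hb : ∀ i, b i = x i := fun i =>
    congrFun (coe_basisOfLinearIndependentOfCardEqFinrank hli hcard) i
  have hSy : ∀ y, S y = lam i₀ • y := by
    have heq : (S : EuclideanSpace ℝ (Fin n) →ₗ[ℝ] EuclideanSpace ℝ (Fin n))
        = lam i₀ • LinearMap.id := by
      apply b.ext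
      intro i
      simp [hb, hlam i, hall i]
    intro y
    have := LinearMap.congr_fun heq y
    simpa using this
  have hlam0 : lam i₀ = ‖T (x i₀)‖ ^ 2 := by
    have h1 : (inner ℝ (S (x i₀)) (x i₀) : ℝ) = lam i₀ := by
      rw [hlam i₀, real_inner_smul_left, real_inner_self_eq_norm_sq, hx i₀]
      ring
    have h2 : (inner ℝ (S (x i₀)) (x i₀) : ℝ) = ‖T (x i₀)‖ ^ 2 := by
      rw [hSinner, real_inner_self_eq_norm_sq]
    rw [← h1, h2]
  have hlam0nn : 0 ≤ lam i₀ := hlam0 ▸ sq_nonneg _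
  refine ⟨Real.sqrt (lam i₀), Real.sqrt_nonneg _, fun y => ?_⟩
  have hTy : ‖T y‖ ^ 2 = lam i₀ * ‖y‖ ^ 2 := by
    have h1 : (inner ℝ (S y) y : ℝ) = ‖T y‖ ^ 2 := by
      rw [hSinner, real_inner_self_eq_norm_sq]
    have h2 : (inner ℝ (S y) y : ℝ) = lam i₀ * ‖y‖ ^ 2 := by
      rw [hSy, real_inner_smul_left, real_inner_self_eq_norm_sq]
    rw [← h1, h2]
  have : ‖T y‖ = Real.sqrt (lam i₀ * ‖y‖ ^ 2) := by
    rw [← hTy, Real.sqrt_sq (norm_nonneg _)]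
  rw [this, Real.sqrt_mul hlam0nn, Real.sqrt_sq (norm_nonneg _)]
end

section
/- Let H = ℓ₂ⁿ and A ⊂ S_H nonempty. If A can be partitioned as A = A₁ ∪ A₂ with A₁, A₂ nonempty and every element of A₁ orthogonal to every element of A₂, then A is not a Koldobsky-set: there exists a linear operator T on H that preserves orthogonality at every point of A but is not a scalar multiple of an isometry. -/
theorem stmt5 {n : ℕ} (A A₁ A₂ : Set (EuclideanSpace ℝ (Fin n)))
    (hA : A ⊆ Metric.sphere (0 : EuclideanSpace ℝ (Fin n)) 1) (hAne : A.Nonempty)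
    (h1 : A₁.Nonempty) (h2 : A₂.Nonempty) (hunion : A = A₁ ∪ A₂)
    (horth : ∀ u ∈ A₁, ∀ v ∈ A₂, inner ℝ u v = (0 : ℝ)) :
    ∃ T : EuclideanSpace ℝ (Fin n) →L[ℝ] EuclideanSpace ℝ (Fin n),
      (∀ x ∈ A, ∀ y, inner ℝ x y = (0 : ℝ) → inner ℝ (T x) (T y) = (0 : ℝ)) ∧
      ¬ ∃ c : ℝ, 0 ≤ c ∧ ∀ y, ‖T y‖ = c * ‖y‖ := by
  let K : Submodule ℝ (EuclideanSpace ℝ (Fin n)) := Submodule.span ℝ A₁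
  have hKo : ∀ v ∈ A₂, v ∈ Kᗮ := by
    intro v hv
    rw [Submodule.mem_orthogonal]
    intro w hw
    induction hw using Submodule.span_induction with
    | mem w hw => exact horth w hw v hv
    | zero => simp
    | add w x _ _ hw hx => rw [inner_add_left, hw, hx, add_zero]
    | smul a w _ hw => rw [inner_smul_left, hw, mul_zero]
  refine ⟨K.subtypeL.comp (K.orthogonalProjectionOnto), ?_, ?_⟩
  · intro x hx y hxy
    rcases (hunion ▸ hx) with hx1 | hx2
    · have hxK : ((K.orthogonalProjectionOnto x : EuclideanSpace ℝ (Fin n))) = x := by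
        rw [Submodule.coe_orthogonalProjectionOnto_apply, Submodule.starProjection_eq_self_iff]
        exact Submodule.subset_span hx1
      have h : inner ℝ (↑(K.orthogonalProjectionOnto x)) y = inner ℝ x (↑(K.orthogonalProjectionOnto y) : EuclideanSpace ℝ (Fin n)) :=
          Submodule.inner_starProjection_left_eq_right K x y
      simp only [ContinuousLinearMap.comp_apply, Submodule.subtypeL_apply, hxK]
      rw [← h, hxK, hxy]
    · have : K.orthogonalProjectionOnto x = 0 :=
        Submodule.orthogonalProjectionOnto_apply_of_mem_orthogonal (hKo x hx2)
      simp [this]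
  · rintro ⟨c, hc, hnorm⟩
    obtain ⟨u, hu⟩ := h1
    obtain ⟨v, hv⟩ := h2
    have hun : ‖u‖ = 1 := by
      have := hA (hunion ▸ Set.mem_union_left A₂ hu)
      simpa using this
    have hvn : ‖v‖ = 1 := by
      have := hA (hunion ▸ Set.mem_union_right A₁ hv)
      simpa using this
    have hTu : ((K.orthogonalProjectionOnto u : EuclideanSpace ℝ (Fin n))) = u := by
      rw [Submodule.coe_orthogonalProjectionOnto_apply, Submodule.starProjection_eq_self_iff]
      exact Submodule.subset_span hu
    have hTv : K.orthogonalProjectionOnto v = 0 :=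
      Submodule.orthogonalProjectionOnto_apply_of_mem_orthogonal (hKo v hv)
    have h1' := hnorm u
    have h2' := hnorm v
    simp only [ContinuousLinearMap.comp_apply, Submodule.subtypeL_apply, hTu, hTv,
      hun, hvn, mul_one] at h1' h2'
    simp [← h1'] at h2'
end

section
/- Let X and Y be real Banach spaces of dimensions n and m respectively. Let f₁,...,f_k ∈ X* be linearly independent (k ≤ n) and g₁,...,g_p ∈ Y* be linearly independent with p < k and p ≤ m. Let F be the convex hull of {f₁,...,f_k}, G = {Σᵢ βᵢgᵢ : Σᵢ βᵢ = 1, βᵢ ∈ ℝ}, A = ∪_{f ∈ F} ker f, and B = ∪_{g ∈ G} ker g. If T : X → Y is linear with T(A) ⊆ B, then T(X) ⊆ B. -/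
open Module

/-- helper: if the values `a i` are not all equal to a common nonzero constant,
then there is an affine combination of them equal to zero. -/
lemma stmt8_aux {p : ℕ} (hp : 0 < p) (a : Fin p → ℝ)
    (h : ¬ ∃ c : ℝ, c ≠ 0 ∧ ∀ i, a i = c) :
    ∃ β : Fin p → ℝ, ∑ i, β i = 1 ∧ ∑ i, β i * a i = 0 := by
  set i0 : Fin p := ⟨0, hp⟩
  by_cases hc : ∀ i, a i = a i0
  · have ha0 : a i0 = 0 := by
      by_contra h0
      exact h ⟨a i0, h0, hc⟩
    refine ⟨Pi.single i0 1, by simp [Fintype.sum_pi_single'], ?_⟩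
    have key : ∀ i, (Pi.single i0 1 : Fin p → ℝ) i * a i = 0 := by
      intro i
      by_cases hi : i = i0
      · subst hi; simp [ha0]
      · simp [Pi.single_apply, hi]
    simp [key]
  · push_neg at hc
    obtain ⟨j, hj⟩ := hc
    have hji : j ≠ i0 := by rintro rfl; exact hj rfl
    have hd : a j - a i0 ≠ 0 := sub_ne_zero.mpr hj
    set s : ℝ := a j / (a j - a i0) with hs
    set β : Fin p → ℝ := fun i => if i = i0 then s else if i = j then 1 - s else 0 with hβ
    have hsum : ∀ (b : Fin p → ℝ), ∑ i, β i * b i = s * b i0 + (1 - s) * b j := by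
      intro b
      have : ∀ i, β i * b i
          = s * (Pi.single i0 (b i0) : Fin p → ℝ) i + (1 - s) * (Pi.single j (b j) : Fin p → ℝ) i := by
        intro i
        by_cases hi : i = i0
        · subst hi; simp [hβ, Pi.single_apply, hji.symm]
        · by_cases hij : i = j
          · subst hij; simp [hβ, Pi.single_apply, hi]
          · simp [hβ, Pi.single_apply, hi, hij]
      rw [Finset.sum_congr rfl fun i _ => this i, Finset.sum_add_distrib,
        ← Finset.mul_sum, ← Finset.mul_sum, Fintype.sum_pi_single', Fintype.sum_pi_single']
    refine ⟨β, ?_, ?_⟩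
    · have := hsum (fun _ => 1)
      simpa [Finset.mul_sum] using (by
        have h1 : ∀ i, β i * (fun _ => (1:ℝ)) i = β i := fun i => mul_one _
        calc ∑ i, β i = ∑ i, β i * (fun _ => (1:ℝ)) i := by simp
          _ = s * 1 + (1 - s) * 1 := hsum _
          _ = 1 := by ring)
    · rw [hsum a, hs]
      field_simp
      ring

theorem stmt8 {X Y : Type*} [NormedAddCommGroup X] [NormedSpace ℝ X] [FiniteDimensional ℝ X]
    [NormedAddCommGroup Y] [NormedSpace ℝ Y] [FiniteDimensional ℝ Y]
    {n m k p : ℕ} (hX : finrank ℝ X = n) (hY : finrank ℝ Y = m)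
    (hkn : k ≤ n) (hpk : p < k) (hpm : p ≤ m)
    (f : Fin k → (X →L[ℝ] ℝ)) (hf : LinearIndependent ℝ f)
    (g : Fin p → (Y →L[ℝ] ℝ)) (hg : LinearIndependent ℝ g)
    (T : X →ₗ[ℝ] Y)
    (hT : ∀ x : X, (∃ φ ∈ convexHull ℝ (Set.range f), φ x = 0) →
      ∃ β : Fin p → ℝ, ∑ i, β i = 1 ∧ (∑ i, β i • g i) (T x) = 0) :
    ∀ z : X, ∃ β : Fin p → ℝ, ∑ i, β i = 1 ∧ (∑ i, β i • g i) (T z) = 0 := by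
  intro z
  have hk : 0 < k := Nat.lt_of_le_of_lt (Nat.zero_le p) hpk
  set i0 : Fin k := ⟨0, hk⟩
  -- p = 0 is impossible
  rcases Nat.eq_zero_or_pos p with hp0 | hp
  · exfalso
    obtain ⟨β, hβ, -⟩ := hT 0 ⟨f i0, subset_convexHull ℝ _ ⟨i0, rfl⟩, by simp⟩
    subst hp0
    simp at hβ
  -- values of g at T z
  set a : Fin p → ℝ := fun i => g i (T z) with ha
  by_cases hall : ∃ c : ℝ, c ≠ 0 ∧ ∀ i, a i = c
  · exfalso
    obtain ⟨c, hc0, hc⟩ := hall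
    -- h i = g i ∘ T as linear maps
    set h : Fin p → (X →ₗ[ℝ] ℝ) := fun i => ((g i).toLinearMap).comp T with hh
    set V : Submodule ℝ X := ⨅ i, LinearMap.ker (h i) with hV
    -- find v ∈ V and j with f j v ≠ 0
    have hexists : ∃ v ∈ V, ∃ j : Fin k, f j v ≠ 0 := by
      by_contra hcon
      push_neg at hcon
      have hker : ∀ j : Fin k, V ≤ LinearMap.ker ((f j).toLinearMap) := by
        intro j v hv
        exact hcon v hv j
      have hmem : ∀ j : Fin k,
          ((f j).toLinearMap) ∈ Submodule.span ℝ (Set.range h) := fun j =>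
        mem_span_of_iInf_ker_le_ker (hker j)
      have hfli : LinearIndependent ℝ (fun j => (f j).toLinearMap) :=
        hf.map' (ContinuousLinearMap.coeLM ℝ) (by
          rw [LinearMap.ker_eq_bot]
          exact fun x y hxy => ContinuousLinearMap.coe_injective hxy)
      have h1 : finrank ℝ (Submodule.span ℝ (Set.range fun j => (f j).toLinearMap)) = k := by
        rw [finrank_span_eq_card hfli, Fintype.card_fin]
      have h2 : Submodule.span ℝ (Set.range fun j => (f j).toLinearMap)
          ≤ Submodule.span ℝ (Set.range h) := by
        rw [Submodule.span_le]
        rintro _ ⟨j, rfl⟩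
        exact hmem j
      have h3 : finrank ℝ (Submodule.span ℝ (Set.range h)) ≤ p := by
        simpa [Set.finrank] using finrank_range_le_card (R := ℝ) h
      have := Submodule.finrank_mono h2
      omega
    obtain ⟨v, hvV, j, hfj⟩ := hexists
    set t : ℝ := -(f j z) / (f j v) with ht
    set x : X := z + t • v with hx
    have hfx : f j x = 0 := by
      simp only [hx, map_add, map_smul, smul_eq_mul, ht]
      field_simp
      ring
    obtain ⟨β, hβ1, hβ2⟩ := hT x ⟨f j, subset_convexHull ℝ _ ⟨j, rfl⟩, hfx⟩
    -- g i (T x) = c for all i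
    have hgTx : ∀ i, g i (T x) = c := by
      intro i
      have hvker : g i (T v) = 0 := by
        have hv' := hvV
        rw [hV, Submodule.mem_iInf] at hv'
        have hv'' := hv' i
        rw [LinearMap.mem_ker] at hv''
        simpa [hh] using hv''
      have hstep : g i (T x) = g i (T z) + t * g i (T v) := by
        simp [hx, map_add, map_smul]
      rw [hstep, hvker, mul_zero, add_zero]
      exact hc i
    rw [ContinuousLinearMap.coe_sum', Finset.sum_apply] at hβ2
    simp only [ContinuousLinearMap.coe_smul', Pi.smul_apply, smul_eq_mul] at hβ2
    have hone : (1 : ℝ) = 0 := by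
      have hsum : ∑ i, β i * g i (T x) = c * ∑ i, β i := by
        rw [Finset.mul_sum]
        exact Finset.sum_congr rfl fun i _ => by rw [hgTx i]; ring
      rw [hsum, hβ1, mul_one] at hβ2
      exact absurd hβ2 hc0
    exact absurd hone one_ne_zero
  · obtain ⟨β, hβ1, hβ2⟩ := stmt8_aux hp a hall
    refine ⟨β, hβ1, ?_⟩
    rw [ContinuousLinearMap.coe_sum', Finset.sum_apply]
    simpa [ContinuousLinearMap.coe_smul'] using hβ2
end

section
/- Let X and Y be finite-dimensional real Banach spaces, T : X → Y linear, and x ∈ X a k-smooth point such that T preserves Birkhoff-James orthogonality at x. Then either Tx = 0 or Tx is a p-smooth point of Y for some p ≥ k. -/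
open Module

/-- The set of norming functionals of `x`. -/
def normingFunctionals {E : Type*} [NormedAddCommGroup E] [NormedSpace ℝ E] (x : E) :
    Set (E →L[ℝ] ℝ) :=
  {f | ‖f‖ = 1 ∧ f x = ‖x‖}

/-- `x` is a `k`-smooth point. -/
def IsKSmooth {E : Type*} [NormedAddCommGroup E] [NormedSpace ℝ E] (k : ℕ) (x : E) : Prop :=
  x ≠ 0 ∧ finrank ℝ (Submodule.span ℝ (normingFunctionals x)) = k

open Metric in
/-- Hahn-Banach: if `‖z + v‖ ≥ ‖z‖` for all `v` in a subspace `V`, then there is a norming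
functional of `z` vanishing on `V`. -/
lemma key_norming {Y : Type*} [NormedAddCommGroup Y] [NormedSpace ℝ Y] [FiniteDimensional ℝ Y]
    (z : Y) (hz : z ≠ 0) (V : Submodule ℝ Y) (h : ∀ v ∈ V, ‖z‖ ≤ ‖z + v‖) :
    ∃ g : Y →L[ℝ] ℝ, ‖g‖ = 1 ∧ g z = ‖z‖ ∧ ∀ v ∈ V, g v = 0 := by
  haveI : IsClosed (V : Set Y) := Submodule.closed_of_finiteDimensional V
  have hnorm : ∀ m : Y, ‖(Submodule.Quotient.mk m : Y ⧸ V)‖ ≤ ‖m‖ :=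
    fun m => Submodule.Quotient.norm_mk_le V m
  set π : Y →L[ℝ] Y ⧸ V := V.mkQ.mkContinuous 1 (fun m => by simpa using hnorm m) with hπ
  have hπ_apply : ∀ m : Y, π m = Submodule.Quotient.mk m := fun m => rfl
  have hmkz : ‖(Submodule.Quotient.mk z : Y ⧸ V)‖ = ‖z‖ := by
    apply le_antisymm (hnorm z)
    rw [show ‖(Submodule.Quotient.mk z : Y ⧸ V)‖ = infDist z (V : Set Y) from
      QuotientAddGroup.norm_mk (S := V.toAddSubgroup) z]
    by_contra hlt
    push_neg at hlt
    obtain ⟨v, hv, hd⟩ := (infDist_lt_iff ⟨0, V.zero_mem⟩).1 hlt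
    have := h (-v) (V.neg_mem hv)
    rw [dist_eq_norm] at hd
    rw [← sub_eq_add_neg] at this
    linarith
  have hz' : (Submodule.Quotient.mk z : Y ⧸ V) ≠ 0 := by
    intro hc
    have hzV : z ∈ V := (Submodule.Quotient.mk_eq_zero V).1 hc
    have := h (-z) (V.neg_mem hzV)
    simp at this
    exact hz this
  obtain ⟨G, hG1, hGz⟩ := exists_dual_vector ℝ _ (norm_ne_zero_iff.2 hz')
  have hgz : (G.comp π) z = ‖z‖ := by
    rw [ContinuousLinearMap.comp_apply, hπ_apply, hGz, hmkz]
    norm_num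
  refine ⟨G.comp π, ?_, hgz, ?_⟩
  · apply le_antisymm
    · apply ContinuousLinearMap.opNorm_le_bound _ zero_le_one
      intro y
      calc ‖(G.comp π) y‖ = ‖G (Submodule.Quotient.mk y)‖ := by
            rw [ContinuousLinearMap.comp_apply, hπ_apply]
        _ ≤ ‖G‖ * ‖(Submodule.Quotient.mk y : Y ⧸ V)‖ := G.le_opNorm _
        _ ≤ 1 * ‖y‖ := by rw [hG1]; simpa using hnorm y
    · have hz0 : (0:ℝ) < ‖z‖ := norm_pos_iff.2 hz
      have := (G.comp π).le_opNorm z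
      rw [hgz] at this
      rw [Real.norm_eq_abs, abs_of_nonneg (norm_nonneg z)] at this
      calc (1:ℝ) = ‖z‖ / ‖z‖ := by field_simp
        _ ≤ ‖G.comp π‖ := by rw [div_le_iff₀ hz0]; exact this
  · intro v hv
    rw [ContinuousLinearMap.comp_apply, hπ_apply]
    have : (Submodule.Quotient.mk v : Y ⧸ V) = 0 := (Submodule.Quotient.mk_eq_zero V).2 hv
    rw [this, map_zero]

theorem stmt9 {X Y : Type*} [NormedAddCommGroup X] [NormedSpace ℝ X] [FiniteDimensional ℝ X]
    [NormedAddCommGroup Y] [NormedSpace ℝ Y] [FiniteDimensional ℝ Y]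
    {k : ℕ} (x : X) (hx : IsKSmooth k x) (T : X →L[ℝ] Y)
    (hT : ∀ y : X, BirkhoffOrth x y → BirkhoffOrth (T x) (T y)) :
    T x = 0 ∨ ∃ p : ℕ, k ≤ p ∧ IsKSmooth p (T x) := by
  by_cases hTx : T x = 0
  · exact Or.inl hTx
  right
  obtain ⟨hx0, hspan⟩ := hx
  have hx0' : (0:ℝ) < ‖x‖ := norm_pos_iff.2 hx0
  have hTx0 : (0:ℝ) < ‖T x‖ := norm_pos_iff.2 hTx
  let L : (Y →L[ℝ] ℝ) →ₗ[ℝ] (X →L[ℝ] ℝ) :=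
    { toFun := fun g => g.comp T
      map_add' := fun g₁ g₂ => by ext y; simp
      map_smul' := fun c g => by ext y; simp }
  have hsub : Submodule.span ℝ (normingFunctionals x) ≤
      Submodule.map L (Submodule.span ℝ (normingFunctionals (T x))) := by
    rw [Submodule.span_le]
    intro f hf
    obtain ⟨hf1, hfx⟩ := hf
    have horth : ∀ v ∈ Submodule.map (T : X →ₗ[ℝ] Y) (LinearMap.ker (f : X →ₗ[ℝ] ℝ)),
        ‖T x‖ ≤ ‖T x + v‖ := by
      rintro v ⟨y, hy, rfl⟩
      have hfy : f y = 0 := hy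
      have hxy : BirkhoffOrth x y := by
        intro t
        have h1 : f (x + t • y) = ‖x‖ := by
          rw [map_add, map_smul, hfy, hfx]; simp
        calc ‖x‖ = f (x + t • y) := h1.symm
          _ ≤ |f (x + t • y)| := le_abs_self _
          _ ≤ ‖f‖ * ‖x + t • y‖ := f.le_opNorm _
          _ = ‖x + t • y‖ := by rw [hf1, one_mul]
      have := hT y hxy 1
      simpa using this
    obtain ⟨g, hg1, hgTx, hgV⟩ := key_norming (T x) hTx _ horth
    have hcomp : ∀ y : X, g (T y) = (‖T x‖ / ‖x‖) * f y := by
      intro y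
      have hker : (f : X →ₗ[ℝ] ℝ) (y - (f y / ‖x‖) • x) = 0 := by
        simp only [map_sub, map_smul, smul_eq_mul]
        rw [show (f : X →ₗ[ℝ] ℝ) x = f x from rfl, hfx]
        field_simp
        exact sub_self _
      have h0 := hgV (T (y - (f y / ‖x‖) • x)) ⟨_, hker, rfl⟩
      rw [map_sub, map_smul] at h0
      rw [map_sub, map_smul] at h0
      rw [smul_eq_mul, hgTx] at h0
      have : g (T y) = f y / ‖x‖ * ‖T x‖ := by linarith
      rw [this]; ring
    have hfeq : f = (‖x‖ / ‖T x‖) • (L g) := by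
      ext y
      simp only [ContinuousLinearMap.smul_apply, smul_eq_mul]
      rw [show (L g) y = g (T y) from rfl, hcomp y]
      field_simp
    rw [hfeq]
    exact Submodule.smul_mem _ _
      (Submodule.mem_map_of_mem (Submodule.subset_span ⟨hg1, hgTx⟩))
  refine ⟨finrank ℝ (Submodule.span ℝ (normingFunctionals (T x))), ?_, hTx, rfl⟩
  calc k = finrank ℝ (Submodule.span ℝ (normingFunctionals x)) := hspan.symm
    _ ≤ finrank ℝ (Submodule.map L (Submodule.span ℝ (normingFunctionals (T x)))) :=
        Submodule.finrank_mono hsub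
    _ ≤ finrank ℝ (Submodule.span ℝ (normingFunctionals (T x))) :=
        Submodule.finrank_map_le L _
end

section
/- Let X and Y be finite-dimensional real Banach spaces, x a k-smooth point of X, and T : X → Y linear such that for all y ∈ X, Tx ⊥_B Ty implies x ⊥_B y. Then Tx is a p-smooth point of the range of T for some p ≤ k. -/
open Module

theorem stmt11 {X Y : Type*} [NormedAddCommGroup X] [NormedSpace ℝ X] [FiniteDimensional ℝ X]
    [NormedAddCommGroup Y] [NormedSpace ℝ Y] [FiniteDimensional ℝ Y]
    {k : ℕ} (x : X) (hx : IsKSmooth k x) (T : X →L[ℝ] Y)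
    (hT : ∀ y : X, BirkhoffOrth (T x) (T y) → BirkhoffOrth x y) :
    ∃ p : ℕ, p ≤ k ∧
      IsKSmooth p (⟨T x, ⟨x, rfl⟩⟩ : LinearMap.range (T : X →ₗ[ℝ] Y)) := by
  classical
  obtain ⟨hx0, hxk⟩ := hx
  have hTx : T x ≠ 0 := by
    intro h
    have h1 : BirkhoffOrth x x := by
      apply hT
      intro t
      simp [h]
    have h2 := h1 (-1)
    simp at h2
    exact hx0 h2
  set v : LinearMap.range (T : X →ₗ[ℝ] Y) := ⟨T x, ⟨x, rfl⟩⟩ with hv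
  have hvn : ‖v‖ = ‖T x‖ := rfl
  have hv0 : v ≠ 0 := fun h => hTx (by simpa [hv] using congrArg Subtype.val h)
  have hnx : (0:ℝ) < ‖x‖ := norm_pos_iff.mpr hx0
  have hnTx : (0:ℝ) < ‖T x‖ := norm_pos_iff.mpr hTx
  set T' : X →L[ℝ] LinearMap.range (T : X →ₗ[ℝ] Y) :=
    T.codRestrict (LinearMap.range (T : X →ₗ[ℝ] Y)) (fun z => ⟨z, rfl⟩) with hT'
  have hT'x : T' x = v := Subtype.ext rfl
  have hsurj : Function.Surjective T' := by
    rintro ⟨z, x', hx'⟩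
    exact ⟨x', Subtype.ext hx'⟩
  set L : (LinearMap.range (T : X →ₗ[ℝ] Y) →L[ℝ] ℝ) →ₗ[ℝ] (X →L[ℝ] ℝ) :=
    { toFun := fun g => g.comp T'
      map_add' := fun g h => by ext z; simp
      map_smul' := fun c g => by ext z; simp } with hL
  have hLinj : Function.Injective L := by
    intro g h hgh
    ext z
    obtain ⟨x', rfl⟩ := hsurj z
    have : (L g) x' = (L h) x' := by rw [hgh]
    simpa [hL] using this
  have key : ∀ g ∈ normingFunctionals v, (L g) ∈ Submodule.span ℝ (normingFunctionals x) := by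
    rintro g ⟨hg1, hg2⟩
    set f : X →L[ℝ] ℝ := L g with hf
    have hfx : f x = ‖T x‖ := by
      show g (T' x) = ‖T x‖
      rw [hT'x, hg2, hvn]
    have hbound : ∀ z : X, |f z| ≤ (‖T x‖ / ‖x‖) * ‖z‖ := by
      intro z
      by_cases hz : f z = 0
      · rw [hz]; simp; positivity
      · set c : ℝ := f z / ‖T x‖ with hc
        have hc0 : c ≠ 0 := div_ne_zero hz hnTx.ne'
        set w : X := z - c • x with hw
        have hfw : f w = 0 := by
          simp only [hw, map_sub, map_smul, smul_eq_mul, hfx, hc]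
          field_simp; simp
        have horth : BirkhoffOrth x w := by
          apply hT
          intro t
          have hgw : g (T' w) = (0:ℝ) := hfw
          have e1 : ‖T x‖ = g (v + t • T' w) := by
            rw [map_add, map_smul, hgw, hg2, hvn]; simp
          have e2 : ‖(v + t • T' w : LinearMap.range (T : X →ₗ[ℝ] Y))‖ = ‖T x + t • T w‖ := rfl
          calc ‖T x‖ = g (v + t • T' w) := e1
            _ ≤ ‖g‖ * ‖v + t • T' w‖ := le_trans (le_abs_self _) (g.le_opNorm _)
            _ = ‖T x + t • T w‖ := by rw [hg1, one_mul, e2]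
        have hub := horth c⁻¹
        have hz' : z = c • (x + c⁻¹ • w) := by
          rw [smul_add, smul_inv_smul₀ hc0, hw]; abel
        have hnorm : ‖z‖ = |c| * ‖x + c⁻¹ • w‖ := by
          rw [hz', norm_smul, Real.norm_eq_abs]
        have h1 : |c| * ‖x‖ ≤ ‖z‖ := by
          rw [hnorm]; exact mul_le_mul_of_nonneg_left hub (abs_nonneg c)
        have h2 : |f z| = |c| * ‖T x‖ := by
          rw [hc, abs_div, abs_of_pos hnTx]; field_simp
        rw [h2, div_mul_eq_mul_div, le_div_iff₀ hnx]
        calc |c| * ‖T x‖ * ‖x‖ = ‖T x‖ * (|c| * ‖x‖) := by ring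
          _ ≤ ‖T x‖ * ‖z‖ := mul_le_mul_of_nonneg_left h1 hnTx.le
    have hfnorm : ‖f‖ = ‖T x‖ / ‖x‖ := by
      apply le_antisymm
      · exact f.opNorm_le_bound (by positivity) (fun z => hbound z)
      · rw [div_le_iff₀ hnx]
        calc ‖T x‖ = f x := hfx.symm
          _ ≤ ‖f‖ * ‖x‖ := le_trans (le_abs_self _) (f.le_opNorm x)
    have hf' : ((‖x‖ / ‖T x‖) • f) ∈ normingFunctionals x := by
      constructor
      · rw [norm_smul (‖x‖ / ‖T x‖) f, Real.norm_eq_abs, abs_of_pos (by positivity), hfnorm]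
        field_simp
      · show (‖x‖ / ‖T x‖) * f x = ‖x‖
        rw [hfx]; field_simp
    have : f = (‖T x‖ / ‖x‖) • ((‖x‖ / ‖T x‖) • f) := by
      rw [smul_smul, show (‖T x‖ / ‖x‖) * (‖x‖ / ‖T x‖) = 1 by field_simp, one_smul]
    rw [this]
    exact Submodule.smul_mem _ _ (Submodule.subset_span hf')
  refine ⟨finrank ℝ (Submodule.span ℝ (normingFunctionals v)), ?_, hv0, rfl⟩
  rw [← hxk]
  have h1 : Submodule.map L (Submodule.span ℝ (normingFunctionals v)) ≤
      Submodule.span ℝ (normingFunctionals x) := by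
    rw [Submodule.map_span]
    exact Submodule.span_le.mpr (by rintro _ ⟨g, hg, rfl⟩; exact key g hg)
  calc finrank ℝ (Submodule.span ℝ (normingFunctionals v))
      = finrank ℝ (Submodule.map L (Submodule.span ℝ (normingFunctionals v))) :=
        (Submodule.equivMapOfInjective L hLinj _).finrank_eq
    _ ≤ finrank ℝ (Submodule.span ℝ (normingFunctionals x)) := Submodule.finrank_mono h1
end

section
/- Let X and Y be finite-dimensional real Banach spaces, x a k-smooth point of X, and T : X → Y linear such that for all y ∈ X, Tx ⊥_B Ty if and only if x ⊥_B y. Then Tx is a k-smooth point of Range(T). -/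
open Module

set_option linter.unusedSectionVars false

section Aux

variable {E : Type*} [NormedAddCommGroup E] [NormedSpace ℝ E] [FiniteDimensional ℝ E]

lemma exists_norming_of_birkhoff {x y : E} (hx : x ≠ 0) (h : BirkhoffOrth x y) :
    ∃ f ∈ normingFunctionals x, f y = 0 := by
  set S : Submodule ℝ E := Submodule.span ℝ {y} with hS
  haveI : IsClosed (S : Set E) := S.closed_of_finiteDimensional
  have hnorm : ‖(Submodule.Quotient.mk x : E ⧸ S)‖ = ‖x‖ := by
    refine le_antisymm (Submodule.Quotient.norm_mk_le S x) ?_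
    refine le_of_forall_pos_le_add fun ε hε => ?_
    obtain ⟨m, hm, hmlt⟩ := Submodule.Quotient.norm_mk_lt (Submodule.Quotient.mk x : E ⧸ S) hε
    have hms : m - x ∈ S := by rwa [Submodule.Quotient.eq] at hm
    obtain ⟨t, ht⟩ := Submodule.mem_span_singleton.mp hms
    have hmx : m = x + t • y := by rw [ht]; abel
    have : ‖x‖ ≤ ‖m‖ := by rw [hmx]; exact h t
    linarith
  have hx' : (Submodule.Quotient.mk x : E ⧸ S) ≠ 0 := by
    intro h0
    rw [h0, norm_zero] at hnorm
    exact hx (norm_eq_zero.mp hnorm.symm)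
  obtain ⟨φ, hφ1, hφ2⟩ := exists_dual_vector ℝ _ (by rw [hnorm]; exact norm_ne_zero_iff.mpr hx)
  set q : E →L[ℝ] E ⧸ S := LinearMap.toContinuousLinearMap S.mkQ with hq
  have hqapp : ∀ z : E, q z = Submodule.Quotient.mk z := fun z => rfl
  set f : E →L[ℝ] ℝ := φ.comp q with hf
  have hfx : f x = ‖x‖ := by
    show φ (q x) = ‖x‖
    rw [hqapp, hφ2, hnorm]; norm_num
  have hfle : ‖f‖ ≤ 1 := by
    refine ContinuousLinearMap.opNorm_le_bound _ zero_le_one fun z => ?_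
    have : ‖φ (q z)‖ ≤ ‖φ‖ * ‖q z‖ := φ.le_opNorm _
    have h2 : ‖q z‖ ≤ ‖z‖ := by rw [hqapp]; exact Submodule.Quotient.norm_mk_le S z
    calc ‖f z‖ = ‖φ (q z)‖ := rfl
      _ ≤ ‖φ‖ * ‖q z‖ := φ.le_opNorm _
      _ = ‖q z‖ := by rw [hφ1, one_mul]
      _ ≤ ‖z‖ := h2
      _ = 1 * ‖z‖ := (one_mul _).symm
  have hfge : 1 ≤ ‖f‖ := by
    have h1 : ‖x‖ = ‖f x‖ := by rw [hfx, Real.norm_eq_abs, abs_of_nonneg (norm_nonneg x)]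
    have h2 : ‖f x‖ ≤ ‖f‖ * ‖x‖ := f.le_opNorm x
    have h3 : (0:ℝ) < ‖x‖ := norm_pos_iff.mpr hx
    nlinarith
  refine ⟨f, ⟨le_antisymm hfle hfge, hfx⟩, ?_⟩
  show φ (q y) = 0
  rw [hqapp, (Submodule.Quotient.mk_eq_zero S).mpr (Submodule.mem_span_singleton_self y), map_zero]


/-- Functionals whose kernel consists of vectors Birkhoff-orthogonal to `x`. -/
def Sset {E : Type*} [NormedAddCommGroup E] [NormedSpace ℝ E] (x : E) : Set (E →L[ℝ] ℝ) :=
  {f | ∀ y, f y = 0 → BirkhoffOrth x y}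


lemma norming_subset_Sset (x : E) : normingFunctionals x ⊆ Sset x := by
  rintro f ⟨hf1, hf2⟩ y hy t
  have h2 : ‖f (x + t • y)‖ ≤ ‖x + t • y‖ := by
    simpa [hf1] using f.le_opNorm (x + t • y)
  have h3 : f (x + t • y) = ‖x‖ := by
    rw [map_add, map_smul, hy, smul_zero, add_zero, hf2]
  calc ‖x‖ = f (x + t • y) := h3.symm
    _ ≤ ‖f (x + t • y)‖ := le_abs_self _
    _ ≤ ‖x + t • y‖ := h2

lemma Sset_subset_span {x : E} (hx : x ≠ 0) :
    Sset x ⊆ (Submodule.span ℝ (normingFunctionals x) : Set (E →L[ℝ] ℝ)) := by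
  intro f hf
  set e : (E →ₗ[ℝ] ℝ) ≃ₗ[ℝ] (E →L[ℝ] ℝ) := LinearMap.toContinuousLinearMap with he
  set W : Submodule ℝ (Module.Dual ℝ E) :=
    (Submodule.span ℝ (normingFunctionals x)).map (e.symm : (E →L[ℝ] ℝ) →ₗ[ℝ] (E →ₗ[ℝ] ℝ)) with hW
  have key : (e.symm f : Module.Dual ℝ E) ∈ W.dualCoannihilator.dualAnnihilator := by
    rw [Submodule.mem_dualAnnihilator]
    intro v hv
    rw [Submodule.mem_dualCoannihilator] at hv
    have hJv : ∀ g ∈ normingFunctionals x, g v = 0 := by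
      intro g hg
      have : (e.symm g : Module.Dual ℝ E) ∈ W :=
        Submodule.mem_map_of_mem (Submodule.subset_span hg)
      have := hv _ this
      exact this
    show (e.symm f) v = 0
    have hev : ∀ h : E →L[ℝ] ℝ, (e.symm h : Module.Dual ℝ E) v = h v := fun h => rfl
    rw [hev]
    by_contra hfv
    set z : E := x - (f x / f v) • v with hz
    have hfz : f z = 0 := by
      rw [hz]; rw [map_sub, map_smul]
      rw [smul_eq_mul, div_mul_cancel₀ _ hfv, sub_self]
    have horth : BirkhoffOrth x z := hf z hfz
    obtain ⟨g, hg, hgz⟩ := exists_norming_of_birkhoff hx horth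
    have : g z = ‖x‖ := by
      rw [hz, map_sub, map_smul, hJv g hg, smul_zero, sub_zero, hg.2]
    rw [hgz] at this
    exact hx (norm_eq_zero.mp this.symm)
  rw [Subspace.dualCoannihilator_dualAnnihilator_eq] at key
  rw [hW] at key
  obtain ⟨u, hu, huf⟩ := key
  have : u = f := by
    have := e.symm.injective (a₁ := u) (a₂ := f) huf
    exact this
  rwa [this] at hu

lemma span_Sset_eq {x : E} (hx : x ≠ 0) :
    Submodule.span ℝ (Sset x) = Submodule.span ℝ (normingFunctionals x) := by
  refine le_antisymm ?_ (Submodule.span_mono (norming_subset_Sset x))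
  rw [Submodule.span_le]
  exact Sset_subset_span hx

end Aux

lemma not_birkhoff_self {E : Type*} [NormedAddCommGroup E] [NormedSpace ℝ E]
    {w : E} (hw : w ≠ 0) : ¬ BirkhoffOrth w w := by
  intro h
  have := h (-1)
  simp at this
  exact hw this

set_option synthInstance.maxHeartbeats 1000000 in
set_option maxHeartbeats 1000000 in
theorem stmt12 {X Y : Type*} [NormedAddCommGroup X] [NormedSpace ℝ X] [FiniteDimensional ℝ X]
    [NormedAddCommGroup Y] [NormedSpace ℝ Y] [FiniteDimensional ℝ Y]
    {k : ℕ} (x : X) (hx : IsKSmooth k x) (T : X →L[ℝ] Y)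
    (hT : ∀ y : X, BirkhoffOrth (T x) (T y) ↔ BirkhoffOrth x y) :
    IsKSmooth k (⟨T x, ⟨x, rfl⟩⟩ : LinearMap.range (T : X →ₗ[ℝ] Y)) := by
  obtain ⟨hx0, hk⟩ := hx
  set Z : Submodule ℝ Y := LinearMap.range (T : X →ₗ[ℝ] Y) with hZ
  set x' : Z := ⟨T x, ⟨x, rfl⟩⟩ with hx'
  -- Birkhoff orthogonality in the submodule equals that in Y
  have hcoe : ∀ u v : Z, BirkhoffOrth u v ↔ BirkhoffOrth (u : Y) (v : Y) := by
    intro u v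
    constructor <;> intro h t <;> simpa using h t
  -- T x ≠ 0
  have hTx0 : T x ≠ 0 := by
    intro h0
    have htriv : BirkhoffOrth (T x) (T x) := by
      intro t; rw [h0]; simp
    exact not_birkhoff_self hx0 ((hT x).mp htriv)
  have hx'0 : x' ≠ 0 := by
    intro h0
    apply hTx0
    have : (x' : Y) = 0 := by rw [h0]; rfl
    exact this
  -- The corestriction of T to its range
  set Tc : X →L[ℝ] Z := T.codRestrict Z (fun y => LinearMap.mem_range_self _ y) with hTc
  have hTcapp : ∀ y : X, ((Tc y : Z) : Y) = T y := fun y => rfl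
  have hTcsurj : ∀ z : Z, ∃ w : X, Tc w = z := by
    rintro ⟨z, w, hw⟩
    exact ⟨w, Subtype.ext hw⟩
  -- Composition with Tc as a linear map on duals
  set Φ : (Z →L[ℝ] ℝ) →ₗ[ℝ] (X →L[ℝ] ℝ) :=
    { toFun := fun g => g.comp Tc
      map_add' := fun g₁ g₂ => by ext z; simp
      map_smul' := fun c g => by ext z; simp } with hΦ
  have hΦinj : Function.Injective Φ := by
    intro g₁ g₂ hgg
    ext z
    obtain ⟨w, rfl⟩ := hTcsurj z
    have := congrArg (fun f : X →L[ℝ] ℝ => f w) hgg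
    exact this
  -- Key: Φ maps Sset x' onto Sset x
  have himg : Φ '' (Sset x') = Sset x := by
    apply Set.Subset.antisymm
    · rintro _ ⟨g, hg, rfl⟩
      intro y hy
      have : g (Tc y) = 0 := hy
      have horth : BirkhoffOrth x' (Tc y) := hg _ this
      have := (hcoe x' (Tc y)).mp horth
      rw [hTcapp] at this
      exact (hT y).mp this
    · intro f hf
      -- f kills ker T
      have hker : ∀ w : X, T w = 0 → f w = 0 := by
        intro w hw
        by_contra hfw
        set z : X := x - (f x / f w) • w with hzdef
        have hfz : f z = 0 := by
          rw [hzdef, map_sub, map_smul]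
          rw [smul_eq_mul, div_mul_cancel₀ _ hfw, sub_self]
        have horth : BirkhoffOrth x z := hf z hfz
        have : BirkhoffOrth (T x) (T z) := (hT z).mpr horth
        have hTz : T z = T x := by
          rw [hzdef, map_sub, map_smul, hw, smul_zero, sub_zero]
        rw [hTz] at this
        exact not_birkhoff_self hTx0 this
      -- factor f through the range of T
      have hker' : LinearMap.ker (↑T : X →ₗ[ℝ] Y) ≤ LinearMap.ker (↑f : X →ₗ[ℝ] ℝ) := by
        intro w hw
        exact LinearMap.mem_ker.mpr (hker w (LinearMap.mem_ker.mp hw))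
      set fbar : (X ⧸ LinearMap.ker (↑T : X →ₗ[ℝ] Y)) →ₗ[ℝ] ℝ :=
        (LinearMap.ker (↑T : X →ₗ[ℝ] Y)).liftQ (↑f : X →ₗ[ℝ] ℝ) hker' with hfbar
      set eT := (↑T : X →ₗ[ℝ] Y).quotKerEquivRange with heT
      set g₀ : (LinearMap.range (↑T : X →ₗ[ℝ] Y)) →ₗ[ℝ] ℝ :=
        fbar.comp (eT.symm : (LinearMap.range (↑T : X →ₗ[ℝ] Y)) →ₗ[ℝ] _) with hg₀
      have hgapp : ∀ y : X, g₀ (Tc y) = f y := by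
        intro y
        have h1 : (Tc y : Z) = ⟨(↑T : X →ₗ[ℝ] Y) y,
            LinearMap.mem_range_self (↑T : X →ₗ[ℝ] Y) y⟩ := rfl
        have h2 := (↑T : X →ₗ[ℝ] Y).quotKerEquivRange_symm_apply_image y
          (LinearMap.mem_range_self (↑T : X →ₗ[ℝ] Y) y)
        show fbar (eT.symm (Tc y)) = f y
        rw [h1, h2]
        exact Submodule.liftQ_apply _ _ y
      refine ⟨LinearMap.toContinuousLinearMap g₀, ?_, ?_⟩
      · intro z hz
        obtain ⟨w, rfl⟩ := hTcsurj z
        have hfw : f w = 0 := by rw [← hgapp w]; exact hz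
        have horth := (hT w).mpr (hf w hfw)
        refine (hcoe x' (Tc w)).mpr ?_
        show BirkhoffOrth (T x) ((Tc w : Z) : Y)
        rw [hTcapp]
        exact horth
      · ext y
        show g₀ (Tc y) = f y
        exact hgapp y
  -- dimension count
  have hmap : (Submodule.span ℝ (Sset x')).map Φ = Submodule.span ℝ (Sset x) := by
    rw [Submodule.map_span, himg]
  have e2 := Submodule.equivMapOfInjective Φ hΦinj (Submodule.span ℝ (Sset x'))
  have hfr : finrank ℝ (Submodule.span ℝ (Sset x')) = finrank ℝ (Submodule.span ℝ (Sset x)) := by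
    rw [← hmap]
    exact e2.finrank_eq
  refine ⟨hx'0, ?_⟩
  rw [← span_Sset_eq hx'0, hfr, span_Sset_eq hx0, hk]
end

section
/- Let X and Y be two-dimensional polyhedral real Banach spaces. If a nonzero linear operator T : X → Y preserves Birkhoff-James orthogonality at two linearly independent extreme points of B_X, then T is bijective. -/
open Module

set_option linter.unusedSectionVars false
set_option linter.unusedVariables false

section Aux
variable {X Y : Type*} [NormedAddCommGroup X] [NormedSpace ℝ X] [FiniteDimensional ℝ X]
  [NormedAddCommGroup Y] [NormedSpace ℝ Y]

lemma aux_extreme_norm_one (hX : finrank ℝ X = 2) {x : X}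
    (hx : x ∈ Set.extremePoints ℝ (Metric.closedBall (0 : X) 1)) : ‖x‖ = 1 := by
  have hx1 : ‖x‖ ≤ 1 := by
    have := hx.1
    simpa [mem_closedBall_zero_iff] using this
  by_contra hne
  have hlt : ‖x‖ < 1 := lt_of_le_of_ne hx1 hne
  have : Nontrivial X := by
    apply Module.nontrivial_of_finrank_pos (R := ℝ)
    omega
  obtain ⟨u, hu⟩ := exists_ne (0 : X)
  have hun : 0 < ‖u‖ := norm_pos_iff.mpr hu
  set ε : ℝ := (1 - ‖x‖) / ‖u‖ with hε
  have hεpos : 0 < ε := div_pos (by linarith) hun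
  have hεu : ‖ε • u‖ = 1 - ‖x‖ := by
    rw [norm_smul, Real.norm_eq_abs, abs_of_pos hεpos, hε, div_mul_cancel₀]
    exact ne_of_gt hun
  have hmem : ∀ s : ℝ, s = 1 ∨ s = -1 → x + s • (ε • u) ∈ Metric.closedBall (0 : X) 1 := by
    intro s hs
    rw [mem_closedBall_zero_iff]
    calc ‖x + s • (ε • u)‖ ≤ ‖x‖ + ‖s • (ε • u)‖ := norm_add_le _ _
      _ ≤ ‖x‖ + ‖ε • u‖ := by
          rcases hs with h | h <;> simp [h, norm_smul]
      _ = 1 := by rw [hεu]; ring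
  have hseg : x ∈ openSegment ℝ (x + (1 : ℝ) • (ε • u)) (x + (-1 : ℝ) • (ε • u)) := by
    refine ⟨1/2, 1/2, by norm_num, by norm_num, by norm_num, ?_⟩
    module
  have := ((mem_extremePoints.mp hx)).2 _ (hmem 1 (Or.inl rfl)) _ (hmem (-1) (Or.inr rfl)) hseg
  have h1 : x + (1 : ℝ) • (ε • u) = x := this.1
  have : ε • u = 0 := by
    have := h1
    simpa using this
  rcases smul_eq_zero.mp this with h | h
  · exact absurd h (ne_of_gt hεpos)
  · exact hu h

lemma aux_neg_extreme {x : X}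
    (hx : x ∈ Set.extremePoints ℝ (Metric.closedBall (0 : X) 1)) :
    -x ∈ Set.extremePoints ℝ (Metric.closedBall (0 : X) 1) := by
  rw [mem_extremePoints] at hx ⊢
  constructor
  · simpa [mem_closedBall_zero_iff] using hx.1
  · intro a ha b hb hab
    have ha' : -a ∈ Metric.closedBall (0 : X) 1 := by
      simpa [mem_closedBall_zero_iff] using ha
    have hb' : -b ∈ Metric.closedBall (0 : X) 1 := by
      simpa [mem_closedBall_zero_iff] using hb
    have hseg : x ∈ openSegment ℝ (-a) (-b) := by
      obtain ⟨s, t, hs, ht, hst, heq⟩ := hab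
      exact ⟨s, t, hs, ht, hst, by rw [smul_neg, smul_neg, ← neg_add, heq, neg_neg]⟩
    obtain ⟨h1, h2⟩ := hx.2 _ ha' _ hb' hseg
    constructor
    · rw [← neg_neg a, h1]
    · rw [← neg_neg b, h2]

set_option maxHeartbeats 1000000 in
lemma aux_exists_two_orth (hX : finrank ℝ X = 2)
    (hpoly : (Set.extremePoints ℝ (Metric.closedBall (0 : X) 1)).Finite)
    {x : X} (hx : x ∈ Set.extremePoints ℝ (Metric.closedBall (0 : X) 1)) :
    ∃ w₁ w₂ : X, LinearIndependent ℝ ![w₁, w₂] ∧ BirkhoffOrth x w₁ ∧ BirkhoffOrth x w₂ := by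
  have hnx : ‖x‖ = 1 := aux_extreme_norm_one hX hx
  have hx0 : x ≠ 0 := by intro h; rw [h, norm_zero] at hnx; norm_num at hnx
  set E := Set.extremePoints ℝ (Metric.closedBall (0 : X) 1) with hE
  set E' := E \ {x} with hE'def
  have hE'fin : E'.Finite := hpoly.subset Set.diff_subset
  have hnegx : -x ∈ E' := by
    refine ⟨aux_neg_extreme hx, ?_⟩
    simp only [Set.mem_singleton_iff]
    intro h
    apply hx0
    have h2 : x + x = 0 := by nth_rewrite 1 [← h]; abel
    have h3 : (2 : ℝ) • x = 0 := by rw [two_smul]; exact h2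
    simpa using h3
  have hball : Metric.closedBall (0 : X) 1 = convexHull ℝ E := by
    have hKM := closure_convexHull_extremePoints (isCompact_closedBall (0 : X) 1)
      (convex_closedBall (0 : X) 1)
    rw [← hKM, (hpoly.isClosed_convexHull (𝕜 := ℝ)).closure_eq]
  set C := convexHull ℝ E' with hC
  have hCB : C ⊆ Metric.closedBall (0 : X) 1 := by
    rw [hball]; exact convexHull_mono Set.diff_subset
  have hxC : x ∉ C := by
    intro hxC
    have hxe : x ∈ Set.extremePoints ℝ C :=
      mem_extremePoints.mpr ⟨hxC, fun a ha b hb hab =>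
        (mem_extremePoints.mp hx).2 a (hCB ha) b (hCB hb) hab⟩
    exact (extremePoints_convexHull_subset hxe).2 rfl
  obtain ⟨f, u, hfu, hux⟩ := geometric_hahn_banach_closed_point (convex_convexHull ℝ E')
    (hE'fin.isClosed_convexHull (𝕜 := ℝ)) hxC
  have hfnegx : f (-x) < u := hfu _ (subset_convexHull ℝ E' hnegx)
  have hfxpos : 0 < f x := by rw [map_neg] at hfnegx; linarith
  set g : X →L[ℝ] ℝ := (f x)⁻¹ • f with hg
  have hgx : g x = 1 := by
    simp [hg, inv_mul_cancel₀ (ne_of_gt hfxpos)]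
  have hgE' : ∀ y ∈ E', g y < 1 := by
    intro y hy
    have h1 : f y < f x := lt_trans (hfu _ (subset_convexHull ℝ E' hy)) hux
    have h2 := (div_lt_one hfxpos).mpr h1
    simpa [hg, div_eq_inv_mul] using h2
  have hspanx : Submodule.span ℝ {x} ≠ ⊤ := by
    intro h
    have h1 : finrank ℝ X = 1 := by
      rw [← finrank_top ℝ X, ← h, finrank_span_singleton hx0]
    omega
  obtain ⟨z, hz⟩ : ∃ z : X, z ∉ Submodule.span ℝ {x} := by
    by_contra h
    push_neg at h
    exact hspanx (Submodule.eq_top_iff'.mpr h)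
  have hzx : LinearIndependent ℝ ![z, x] := by
    rw [linearIndependent_fin2]
    constructor
    · simpa using hx0
    · intro a ha
      exact hz (Submodule.mem_span_singleton.mpr ⟨a, by simpa using ha⟩)
  have hcard : Fintype.card (Fin 2) = finrank ℝ X := by simp [hX]
  set Bas := basisOfLinearIndependentOfCardEqFinrank hzx hcard with hBasdef
  have hBas : ⇑Bas = ![z, x] := coe_basisOfLinearIndependentOfCardEqFinrank hzx hcard
  set h : X →L[ℝ] ℝ := LinearMap.toContinuousLinearMap (Bas.coord 0) with hh
  have hhx : h x = 0 := by
    have hx1 : x = Bas 1 := by rw [hBas]; simp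
    rw [hx1]
    simp [hh, Basis.coord_apply, Basis.repr_self]
  have hhz : h z = 1 := by
    have hz0 : z = Bas 0 := by rw [hBas]; simp
    rw [hz0]
    simp [hh, Basis.coord_apply, Basis.repr_self]
  set t := hE'fin.toFinset with ht
  have htne : t.Nonempty := ⟨-x, hE'fin.mem_toFinset.mpr hnegx⟩
  set δ := t.inf' htne (fun y => (1 - g y) / (‖h y‖ + 1)) with hδ
  have hδpos : 0 < δ := by
    rw [hδ, Finset.lt_inf'_iff]
    intro y hy
    have hy' : y ∈ E' := hE'fin.mem_toFinset.mp hy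
    exact div_pos (by linarith [hgE' y hy']) (by positivity)
  have hkey : ∀ y ∈ E', g y + δ * h y ≤ 1 := by
    intro y hy
    have h1 : δ ≤ (1 - g y) / (‖h y‖ + 1) := Finset.inf'_le _ (hE'fin.mem_toFinset.mpr hy)
    have h2 : h y ≤ ‖h y‖ := by rw [Real.norm_eq_abs]; exact le_abs_self _
    have h3 : δ * h y ≤ δ * (‖h y‖ + 1) :=
      mul_le_mul_of_nonneg_left (by linarith) (le_of_lt hδpos)
    have h4 : δ * (‖h y‖ + 1) ≤ 1 - g y := by
      have h5 := mul_le_mul_of_nonneg_right h1 (show (0:ℝ) ≤ ‖h y‖ + 1 by positivity)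
      rwa [div_mul_cancel₀ _ (show (‖h y‖ + 1) ≠ 0 by positivity)] at h5
    linarith
  set g₂ : X →L[ℝ] ℝ := g + δ • h with hg₂
  have hg₂x : g₂ x = 1 := by simp [hg₂, hhx, hgx]
  have hg₂E' : ∀ y ∈ E', g₂ y ≤ 1 := by
    intro y hy
    have := hkey y hy
    simpa [hg₂] using this
  have hbound : ∀ l : X →L[ℝ] ℝ, l x = 1 → (∀ y ∈ E', l y ≤ 1) → ∀ w : X, l w ≤ ‖w‖ := by
    intro l hlx hlE' w
    have honE : ∀ y ∈ E, l y ≤ 1 := by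
      intro y hy
      by_cases hyx : y = x
      · rw [hyx, hlx]
      · exact hlE' y ⟨hy, hyx⟩
    have honB : ∀ y ∈ Metric.closedBall (0 : X) 1, l y ≤ 1 := by
      intro y hy
      rw [hball] at hy
      have hsub : convexHull ℝ E ⊆ {w : X | l w ≤ 1} :=
        convexHull_min honE (convex_halfSpace_le (LinearMap.isLinear _) 1)
      exact hsub hy
    rcases eq_or_ne w 0 with rfl | hw
    · simp
    · have hwn : 0 < ‖w‖ := norm_pos_iff.mpr hw
      have hmem : ‖w‖⁻¹ • w ∈ Metric.closedBall (0 : X) 1 := by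
        rw [mem_closedBall_zero_iff, norm_smul, norm_inv, norm_norm,
          inv_mul_cancel₀ (ne_of_gt hwn)]
      have h6 := honB _ hmem
      rw [map_smul] at h6
      have h7 : ‖w‖⁻¹ * l w ≤ 1 := by simpa using h6
      calc l w = ‖w‖ * (‖w‖⁻¹ * l w) := by field_simp
        _ ≤ ‖w‖ * 1 := mul_le_mul_of_nonneg_left h7 (le_of_lt hwn)
        _ = ‖w‖ := mul_one _
  have horth : ∀ l : X →L[ℝ] ℝ, l x = 1 → (∀ y ∈ E', l y ≤ 1) →
      ∀ w : X, l w = 0 → BirkhoffOrth x w := by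
    intro l hlx hlE' w hlw s
    have h1 : l (x + s • w) = 1 := by simp [map_add, map_smul, hlx, hlw]
    have h2 := hbound l hlx hlE' (x + s • w)
    rw [h1] at h2
    rw [hnx]; linarith
  have hgz₂ : g₂ z = g z + δ := by simp [hg₂, hhz]
  refine ⟨z - (g z) • x, z - (g₂ z) • x, ?_, ?_, ?_⟩
  · rw [LinearIndependent.pair_iff]
    intro s r hsr
    have hcomb : (s + r) • z + (-(s * g z) - r * g₂ z) • x = 0 := by
      rw [← hsr]; module
    obtain ⟨hA, hB⟩ := LinearIndependent.pair_iff.mp hzx _ _ hcomb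
    rw [hgz₂] at hB
    have hr : r * δ = 0 := by linear_combination -hB - (g z) * hA
    have hr0 : r = 0 := by
      rcases mul_eq_zero.mp hr with h' | h'
      · exact h'
      · exact absurd h' (ne_of_gt hδpos)
    constructor
    · rw [hr0] at hA; linarith
    · exact hr0
  · exact horth g hgx (fun y hy => le_of_lt (hgE' y hy)) _ (by simp [map_sub, map_smul, hgx])
  · exact horth g₂ hg₂x hg₂E' _ (by simp [map_sub, map_smul, hg₂x])

lemma aux_core (hX : finrank ℝ X = 2)
    (hpoly : (Set.extremePoints ℝ (Metric.closedBall (0 : X) 1)).Finite)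
    {x : X} (hx : x ∈ Set.extremePoints ℝ (Metric.closedBall (0 : X) 1))
    (T : X →L[ℝ] Y)
    (hpres : ∀ y : X, BirkhoffOrth x y → BirkhoffOrth (T x) (T y))
    (hTx : T x ≠ 0) {v : X} (hTv : T v = 0) (hvx : ∀ c : ℝ, v ≠ c • x) : False := by
  obtain ⟨w₁, w₂, hli, ho1, ho2⟩ := aux_exists_two_orth hX hpoly hx
  have hx0 : x ≠ 0 := by
    intro h; apply hTx; rw [h, map_zero]
  have hvxli : LinearIndependent ℝ ![v, x] := by
    rw [linearIndependent_fin2]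
    constructor
    · simpa using hx0
    · intro a ha
      exact hvx a (by simpa using ha.symm)
  have hspan : Submodule.span ℝ {v, x} = ⊤ := by
    have := hvxli.span_eq_top_of_card_eq_finrank (by simp [hX])
    simpa [Set.pair_comm] using this
  have hmem : ∀ w : X, ∃ c d : ℝ, c • v + d • x = w := by
    intro w
    have : w ∈ Submodule.span ℝ ({v, x} : Set X) := by rw [hspan]; trivial
    exact Submodule.mem_span_pair.mp this
  obtain ⟨c₁, d₁, hw₁⟩ := hmem w₁
  obtain ⟨c₂, d₂, hw₂⟩ := hmem w₂
  -- some dᵢ ≠ 0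
  have hd : ∃ w : X, ∃ c d : ℝ, c • v + d • x = w ∧ d ≠ 0 ∧ BirkhoffOrth x w := by
    by_cases h1 : d₁ = 0
    · by_cases h2 : d₂ = 0
      · exfalso
        rw [h1] at hw₁; rw [h2] at hw₂
        have hcomb : c₂ • w₁ + (-c₁) • w₂ = 0 := by
          rw [← hw₁, ← hw₂]; module
        obtain ⟨hA, hB⟩ := LinearIndependent.pair_iff.mp hli _ _ hcomb
        have hc₁ : c₁ = 0 := by linarith
        have hw₁0 : w₁ = 0 := by rw [← hw₁, hc₁]; simp
        have := LinearIndependent.pair_iff.mp hli 1 0 (by rw [hw₁0]; simp)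
        exact one_ne_zero this.1
      · exact ⟨w₂, c₂, d₂, hw₂, h2, ho2⟩
    · exact ⟨w₁, c₁, d₁, hw₁, h1, ho1⟩
  obtain ⟨w, c, d, hw, hd0, how⟩ := hd
  have hTw : T w = d • T x := by
    rw [← hw]; simp [map_add, map_smul, hTv]
  have := hpres w how (-d⁻¹)
  rw [hTw, smul_smul] at this
  have hzero : T x + (-d⁻¹ * d) • T x = 0 := by
    rw [neg_mul, inv_mul_cancel₀ hd0]
    simp
  rw [hzero] at this
  simp only [norm_zero] at this
  exact hTx (norm_le_zero_iff.mp this)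

end Aux

theorem stmt13 {X Y : Type*} [NormedAddCommGroup X] [NormedSpace ℝ X] [FiniteDimensional ℝ X]
    [NormedAddCommGroup Y] [NormedSpace ℝ Y] [FiniteDimensional ℝ Y]
    (hX : finrank ℝ X = 2) (hY : finrank ℝ Y = 2)
    (hpolyX : (Set.extremePoints ℝ (Metric.closedBall (0 : X) 1)).Finite)
    (hpolyY : (Set.extremePoints ℝ (Metric.closedBall (0 : Y) 1)).Finite)
    (T : X →L[ℝ] Y) (hT0 : T ≠ 0)
    (x₁ x₂ : X)
    (h1 : x₁ ∈ Set.extremePoints ℝ (Metric.closedBall (0 : X) 1))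
    (h2 : x₂ ∈ Set.extremePoints ℝ (Metric.closedBall (0 : X) 1))
    (hli : LinearIndependent ℝ ![x₁, x₂])
    (hp1 : ∀ y : X, BirkhoffOrth x₁ y → BirkhoffOrth (T x₁) (T y))
    (hp2 : ∀ y : X, BirkhoffOrth x₂ y → BirkhoffOrth (T x₂) (T y)) :
    Function.Bijective T := by
  -- x₂ not a multiple of x₁ and vice versa
  have h21 : ∀ c : ℝ, x₂ ≠ c • x₁ := by
    intro c hc
    have := LinearIndependent.pair_iff.mp hli (-c) 1 (by rw [hc]; module)
    exact one_ne_zero this.2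
  have h12 : ∀ c : ℝ, x₁ ≠ c • x₂ := by
    intro c hc
    have := LinearIndependent.pair_iff.mp hli 1 (-c) (by rw [hc]; module)
    exact one_ne_zero this.1
  -- not both T x₁, T x₂ vanish
  have hspan : Submodule.span ℝ {x₁, x₂} = ⊤ := by
    have := hli.span_eq_top_of_card_eq_finrank (by simp [hX])
    simpa [Set.pair_comm] using this
  have hT12 : ¬(T x₁ = 0 ∧ T x₂ = 0) := by
    rintro ⟨ha, hb⟩
    apply hT0
    ext z
    have hz : z ∈ Submodule.span ℝ ({x₁, x₂} : Set X) := by rw [hspan]; trivial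
    obtain ⟨a, b, hab⟩ := Submodule.mem_span_pair.mp hz
    rw [← hab]
    simp [map_add, map_smul, ha, hb]
  have hker : ∀ v : X, T v = 0 → v = 0 := by
    intro v hTv
    by_contra hv0
    by_cases hc1 : ∃ c : ℝ, v = c • x₁
    · obtain ⟨c, hc⟩ := hc1
      have hc0 : c ≠ 0 := by
        intro h; apply hv0; rw [hc, h, zero_smul]
      have hTx₁ : T x₁ = 0 := by
        have : c • T x₁ = 0 := by rw [← map_smul, ← hc, hTv]
        rcases smul_eq_zero.mp this with h | h
        · exact absurd h hc0
        · exact h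
      have hTx₂ : T x₂ ≠ 0 := by
        intro h; exact hT12 ⟨hTx₁, h⟩
      exact aux_core hX hpolyX h2 T hp2 hTx₂ hTx₁ h12
    · push_neg at hc1
      by_cases hc2 : ∃ c : ℝ, v = c • x₂
      · obtain ⟨c, hc⟩ := hc2
        have hc0 : c ≠ 0 := by
          intro h; apply hv0; rw [hc, h, zero_smul]
        have hTx₂ : T x₂ = 0 := by
          have : c • T x₂ = 0 := by rw [← map_smul, ← hc, hTv]
          rcases smul_eq_zero.mp this with h | h
          · exact absurd h hc0
          · exact h
        have hTx₁ : T x₁ ≠ 0 := by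
          intro h; exact hT12 ⟨h, hTx₂⟩
        exact aux_core hX hpolyX h1 T hp1 hTx₁ hTx₂ h21
      · push_neg at hc2
        by_cases hTx₁ : T x₁ = 0
        · have hTx₂ : T x₂ ≠ 0 := fun h => hT12 ⟨hTx₁, h⟩
          exact aux_core hX hpolyX h2 T hp2 hTx₂ hTv hc2
        · exact aux_core hX hpolyX h1 T hp1 hTx₁ hTv hc1
  have hinj : Function.Injective T := by
    intro a b hab
    have : T (a - b) = 0 := by rw [map_sub, hab, sub_self]
    have := hker _ this
    exact sub_eq_zero.mp this
  have hsurj : Function.Surjective T := by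
    have := (LinearMap.injective_iff_surjective_of_finrank_eq_finrank
      (f := (T : X →ₗ[ℝ] Y)) (by rw [hX, hY])).mp hinj
    exact this
  exact ⟨hinj, hsurj⟩
end

section
/- Let X = ℓ∞ⁿ (ℝⁿ with the supremum norm). If a linear operator T on X preserves Birkhoff-James orthogonality at two extreme points u₁, u₂ of the unit ball (vectors with all coordinates ±1), then ‖Tu₁‖ = ‖Tu₂‖. -/
lemma coord_le_norm {n : ℕ} (f : PiLp ⊤ (fun _ : Fin n => ℝ)) (i : Fin n) :
    ‖f i‖ ≤ ‖f‖ := by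
  rw [PiLp.norm_eq_ciSup]
  exact le_ciSup (f := fun i => ‖f i‖) (Set.Finite.bddAbove (Set.finite_range _)) i

lemma key_orth {n : ℕ} (u v : PiLp ⊤ (fun _ : Fin n => ℝ))
    (hu : ∀ j, u j = 1 ∨ u j = -1) (hv : ∀ j, v j = 1 ∨ v j = -1)
    {j0 : Fin n} (hj : u j0 = v j0) : BirkhoffOrth u (u - v) := by
  intro t
  haveI : Nonempty (Fin n) := ⟨j0⟩
  have h1 : ‖u‖ ≤ 1 := by
    rw [PiLp.norm_eq_ciSup]
    apply ciSup_le
    intro i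
    rcases hu i with h | h <;> simp [h]
  have h2 : ‖(u + t • (u - v)) j0‖ = ‖u j0‖ := by
    have : (u + t • (u - v)) j0 = u j0 + t * (u j0 - v j0) := rfl
    rw [this, hj]; ring_nf
  have h3 : ‖u j0‖ = 1 := by rcases hu j0 with h | h <;> simp [h]
  calc ‖u‖ ≤ 1 := h1
    _ = ‖(u + t • (u - v)) j0‖ := by rw [h2, h3]
    _ ≤ ‖u + t • (u - v)‖ := coord_le_norm _ _

theorem stmt16 {n : ℕ}
    (T : PiLp ⊤ (fun _ : Fin n => ℝ) →L[ℝ] PiLp ⊤ (fun _ : Fin n => ℝ))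
    (u₁ u₂ : PiLp ⊤ (fun _ : Fin n => ℝ))
    (hu₁ : ∀ j, u₁ j = 1 ∨ u₁ j = -1) (hu₂ : ∀ j, u₂ j = 1 ∨ u₂ j = -1)
    (hp1 : ∀ y, BirkhoffOrth u₁ y → BirkhoffOrth (T u₁) (T y))
    (hp2 : ∀ y, BirkhoffOrth u₂ y → BirkhoffOrth (T u₂) (T y)) :
    ‖T u₁‖ = ‖T u₂‖ := by
  by_cases hex : ∃ j0, u₁ j0 = u₂ j0
  · obtain ⟨j0, hj0⟩ := hex
    have o1 := hp1 (u₁ - u₂) (key_orth u₁ u₂ hu₁ hu₂ hj0)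
    have o2 := hp2 (u₂ - u₁) (key_orth u₂ u₁ hu₂ hu₁ hj0.symm)
    have e1 := o1 (-1)
    have e2 := o2 (-1)
    simp only [map_sub, neg_smul, one_smul] at e1 e2
    have : T u₁ + -(T u₁ - T u₂) = T u₂ := by abel
    rw [this] at e1
    have : T u₂ + -(T u₂ - T u₁) = T u₁ := by abel
    rw [this] at e2
    linarith
  · push_neg at hex
    have : u₂ = -u₁ := by
      ext j
      have hj := hex j
      rcases hu₁ j with h | h <;> rcases hu₂ j with h' | h' <;>
        simp [Pi.neg_apply, h, h'] at hj ⊢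
    rw [this, map_neg, norm_neg]
end
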